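/- arXiv:0710.0635 — 2 statements merged into one kernel-verified Lean document; each statement's English description precedes it below -/
import Mathlib

section
/- Let w_1, …, w_m be linearly independent linear forms in B with 𝔽_p-span W, and let S be a system of line representatives for W. Then there exists a nonzero scalar λ ∈ 𝔽_p such that det M(w_1,…,w_m) = λ · ∏_{w∈S} w. -/
/-!
Every nonzero `u ∈ W` is a combination `∑ c_j w_j`, and since Frobenius is additive on
`𝔽_p`-combinations, replacing a column `j₀` with `c_{j₀} ≠ 0` by `∑ c_j · (column j)` turns it
into `(u^(p^i))_i = u · (u^(p^i - 1))_i`; so `u` divides the determinant. The elements of `S` are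
pairwise non-associated primes (linear forms), hence their product divides the determinant too.
Both sides are homogeneous of degree `1 + p + ⋯ + p^(m-1) = (p^m - 1)/(p - 1) = |S|`, and the
determinant is nonzero: it equals `det M(X_1,…,X_m) · det v`, and in the Leibniz expansion of
`det M(X_1,…,X_m)` distinct permutations give distinct monomials. So the quotient is a nonzero
constant.
-/

open MvPolynomial Matrix

/-- The linear form `Σ_i v_i X_i` in `B = (ZMod p)[X_1, …, X_m]` associated to a
coefficient vector `v : Fin m → ZMod p`. -/
noncomputable def linForm (p m : ℕ) (v : Fin m → ZMod p) :
    MvPolynomial (Fin m) (ZMod p) :=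
  ∑ i : Fin m, MvPolynomial.C (v i) * MvPolynomial.X i

/-- A system of line representatives for a subspace `W` of an `𝔽_p`-module:
a finite set of nonzero elements of `W` such that every nonzero element of `W`
is a scalar multiple of exactly one element of the set. -/
def IsLineReps {p : ℕ} {M : Type*} [AddCommGroup M] [Module (ZMod p) M]
    (W : Submodule (ZMod p) M) (S : Finset M) : Prop :=
  (∀ w ∈ S, w ∈ W ∧ w ≠ 0) ∧
    ∀ w ∈ W, w ≠ 0 → ∃! u, u ∈ S ∧ ∃ c : ZMod p, w = c • u

theorem Nat.card_subtype_ne {α : Type*} [Finite α] (a : α) :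
    Nat.card {x // x ≠ a} = Nat.card α - 1 := by
  classical
  have := Fintype.ofFinite α
  simp only [Nat.card_eq_fintype_card, Fintype.card_subtype_compl, Fintype.card_subtype_eq]

theorem Finset.prod_dvd_of_prime_of_eq_of_associated {M₀ : Type*} [CommMonoidWithZero M₀]
    [IsCancelMulZero M₀] {s : Finset M₀} {n : M₀} (hp : ∀ a ∈ s, Prime a)
    (hs : ∀ a ∈ s, ∀ b ∈ s, Associated a b → a = b) (hn : ∀ a ∈ s, a ∣ n) :
    ∏ a ∈ s, a ∣ n := by
  classical
  have hinj : Set.InjOn Associates.mk (s : Set M₀) := fun a ha b hb hab =>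
    hs a ha b hb (Associates.mk_eq_mk_iff_associated.mp hab)
  have himage : ∏ a ∈ s, Associates.mk a = ∏ b ∈ s.image Associates.mk, b :=
    (Finset.prod_image (f := fun b => b) hinj).symm
  rw [← Associates.mk_dvd_mk, ← Associates.finsetProd_mk, himage]
  refine Finset.prod_primes_dvd _ ?_ ?_ <;> simp only [Finset.mem_image] <;>
    rintro _ ⟨a, ha, rfl⟩
  · exact Associates.prime_mk.mpr (hp a ha)
  · exact Associates.mk_dvd_mk.mpr (hn a ha)

namespace MvPolynomial

variable {σ K : Type*} [Field K]

theorem prime_of_isHomogeneous_one [UniqueFactorizationMonoid (MvPolynomial σ K)]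
    {f : MvPolynomial σ K} (hf : f.IsHomogeneous 1) (hf0 : f ≠ 0) : Prime f := by
  refine (irreducible_of_totalDegree_eq_one (hf.totalDegree hf0) fun x hx => ?_).prime
  obtain ⟨d, hd⟩ := ne_zero_iff.mp hf0
  exact (ne_zero_of_dvd_ne_zero hd (hx d)).isUnit

theorem exists_eq_C_mul_of_dvd_of_isHomogeneous {f g : MvPolynomial σ K} {n : ℕ}
    (hf : f.IsHomogeneous n) (hg : g.IsHomogeneous n) (hf0 : f ≠ 0) (hgf : g ∣ f) :
    ∃ c : K, c ≠ 0 ∧ f = C c * g := by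
  obtain ⟨q, rfl⟩ := hgf
  have hg0 : g ≠ 0 := left_ne_zero_of_mul hf0
  have hq0 : q ≠ 0 := right_ne_zero_of_mul hf0
  have hq : q.totalDegree = 0 := by
    have := totalDegree_mul_of_isDomain hg0 hq0
    rw [hf.totalDegree hf0, hg.totalDegree hg0] at this
    omega
  rw [totalDegree_eq_zero_iff_eq_C] at hq
  refine ⟨coeff 0 q, fun h => hq0 (by rw [hq, h, C_0]), ?_⟩
  rw [← hq, mul_comm]

end MvPolynomial

theorem sum_smul_pow_char_pow {p : ℕ} [Fact p.Prime] {R : Type*} [CommRing R]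
    [Algebra (ZMod p) R] [ExpChar R p] {ι : Type*} (s : Finset ι) (c : ι → ZMod p)
    (w : ι → R) (k : ℕ) :
    (∑ j ∈ s, c j • w j) ^ p ^ k = ∑ j ∈ s, c j • w j ^ p ^ k := by
  rw [sum_pow_char_pow]
  refine Finset.sum_congr rfl fun j _ => ?_
  rw [Algebra.smul_def, Algebra.smul_def, mul_pow, ← map_pow, ZMod.pow_card_pow]

namespace Matrix

variable {m : ℕ}

def moore (p : ℕ) {R : Type*} [CommRing R] (w : Fin m → R) : Matrix (Fin m) (Fin m) R :=
  of fun i j => w j ^ p ^ (i : ℕ)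

section CharP

variable {p : ℕ} [Fact p.Prime] {R : Type*} [CommRing R] [Algebra (ZMod p) R] [ExpChar R p]

theorem moore_sum_smul (v : Matrix (Fin m) (Fin m) (ZMod p)) (x : Fin m → R) :
    moore p (fun j => ∑ i, v j i • x i) = moore p x * (v.map (algebraMap (ZMod p) R))ᵀ := by
  ext k j
  rw [moore, of_apply, sum_smul_pow_char_pow, mul_apply]
  simp only [moore, of_apply, transpose_apply, map_apply, Algebra.smul_def, mul_comm]

theorem sum_smul_dvd_det_moore (w : Fin m → R) (c : Fin m → ZMod p) {j₀ : Fin m}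
    (hc : c j₀ ≠ 0) : (∑ j, c j • w j) ∣ (moore p w).det := by
  classical
  set u := ∑ j, c j • w j
  have hcol : (fun k => ∑ j, algebraMap (ZMod p) R (c j) • moore p w k j) =
      u • fun k : Fin m => u ^ (p ^ (k : ℕ) - 1) := by
    funext k
    have hk : p ^ (k : ℕ) = p ^ (k : ℕ) - 1 + 1 :=
      (Nat.sub_add_cancel (Nat.one_le_pow _ _ (Fact.out : p.Prime).pos)).symm
    simp only [moore, of_apply, ← Algebra.smul_def, smul_eq_mul, Pi.smul_apply]
    rw [← sum_smul_pow_char_pow, hk, pow_succ', ← hk]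
  have h := det_updateCol_sum (moore p w) j₀ fun j => algebraMap (ZMod p) R (c j)
  rw [hcol, det_updateCol_smul, smul_eq_mul] at h
  exact ((isUnit_iff_ne_zero.mpr hc).map (algebraMap (ZMod p) R)).dvd_mul_left.mp ⟨_, h.symm⟩

theorem dvd_det_moore_of_mem_span {w : Fin m → R} {u : R}
    (hu : u ∈ Submodule.span (ZMod p) (Set.range w)) (hu0 : u ≠ 0) : u ∣ (moore p w).det := by
  obtain ⟨c, rfl⟩ := (Submodule.mem_span_range_iff_exists_fun (ZMod p)).mp hu
  obtain ⟨j₀, hj₀⟩ : ∃ j₀, c j₀ ≠ 0 := by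
    by_contra! h
    exact hu0 (by simp [h])
  exact sum_smul_dvd_det_moore w c hj₀

end CharP

/-- The exponent of the monomial `∏ i, X_i ^ p ^ σ(i)` that `σ` contributes to the Leibniz
expansion of `det M(X_1,…,X_m)`. -/
noncomputable def mooreExponent (p : ℕ) (σ : Equiv.Perm (Fin m)) : Fin m →₀ ℕ :=
  ∑ i, Finsupp.single i (p ^ (σ i : ℕ))

theorem mooreExponent_apply (p : ℕ) (σ : Equiv.Perm (Fin m)) (i : Fin m) :
    mooreExponent p σ i = p ^ (σ i : ℕ) := by
  simp [mooreExponent, Finsupp.finsetSum_apply, Finsupp.single_apply]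

theorem mooreExponent_injective {p : ℕ} (hp : 1 < p) :
    Function.Injective (mooreExponent (m := m) p) :=
  fun σ τ h => Equiv.ext fun i => Fin.ext <| Nat.pow_right_injective hp <| by
    simpa only [mooreExponent_apply] using DFunLike.congr_fun h i

theorem degree_mooreExponent (p : ℕ) (σ : Equiv.Perm (Fin m)) :
    (mooreExponent p σ).degree = ∑ i : Fin m, p ^ (i : ℕ) := by
  rw [mooreExponent, map_sum]
  simp only [Finsupp.degree_single]
  exact Equiv.sum_comp σ fun i => p ^ (i : ℕ)

variable {R : Type*} [CommRing R]

theorem det_moore_X (p : ℕ) :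
    (moore p (X : Fin m → MvPolynomial (Fin m) R)).det =
      ∑ σ : Equiv.Perm (Fin m), monomial (mooreExponent p σ) ((Equiv.Perm.sign σ : ℤ) : R) := by
  rw [det_apply']
  refine Finset.sum_congr rfl fun σ _ => ?_
  simp only [moore, of_apply, X_pow_eq_monomial, mooreExponent]
  rw [← monomial_sum_one, ← map_intCast (C : R →+* MvPolynomial (Fin m) R), C_mul_monomial,
    mul_one]

theorem isHomogeneous_det_moore_X (p : ℕ) :
    (moore p (X : Fin m → MvPolynomial (Fin m) R)).det.IsHomogeneous
      (∑ i : Fin m, p ^ (i : ℕ)) := by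
  rw [det_moore_X]
  exact IsHomogeneous.sum _ _ _ fun σ _ => isHomogeneous_monomial _ (degree_mooreExponent p σ)

theorem coeff_mooreExponent_one_det_moore_X {p : ℕ} (hp : 1 < p) :
    coeff (mooreExponent p 1) (moore p (X : Fin m → MvPolynomial (Fin m) R)).det = 1 := by
  classical
  simp only [det_moore_X, coeff_sum, coeff_monomial, (mooreExponent_injective hp).eq_iff,
    Finset.sum_ite_eq', Finset.mem_univ, if_true, Equiv.Perm.sign_one, Units.val_one,
    Int.cast_one]

theorem det_moore_X_ne_zero [Nontrivial R] {p : ℕ} (hp : 1 < p) :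
    (moore p (X : Fin m → MvPolynomial (Fin m) R)).det ≠ 0 := fun h =>
  one_ne_zero <| (coeff_mooreExponent_one_det_moore_X (R := R) hp).symm.trans
    (by rw [h, coeff_zero])

end Matrix

namespace IsLineReps

variable {p : ℕ} [Fact p.Prime]

theorem card_mul_sub_one {M : Type*} [AddCommGroup M] [Module (ZMod p) M]
    {W : Submodule (ZMod p) M} {S : Finset M} (hS : IsLineReps W S) [Finite W] :
    S.card * (p - 1) = Nat.card W - 1 := by
  let f : S × (ZMod p)ˣ → {x : W // x ≠ 0} := fun uc =>
    ⟨⟨(uc.2 : ZMod p) • (uc.1 : M), W.smul_mem _ (hS.1 _ uc.1.2).1⟩,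
      fun h => smul_ne_zero uc.2.ne_zero (hS.1 _ uc.1.2).2 (congrArg Subtype.val h)⟩
  have hf : Function.Bijective f := by
    constructor
    · rintro ⟨⟨u, hu⟩, c⟩ ⟨⟨u', hu'⟩, c'⟩ h
      have h' : (c : ZMod p) • u = (c' : ZMod p) • u' := congrArg (fun x => (x.1 : M)) h
      obtain ⟨y, -, hy⟩ := hS.2 _ (W.smul_mem _ (hS.1 u hu).1)
        (smul_ne_zero c.ne_zero (hS.1 u hu).2)
      obtain rfl : u = u' := (hy u ⟨hu, c, rfl⟩).trans (hy u' ⟨hu', c', h'⟩).symm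
      obtain rfl : c = c' := Units.ext (smul_left_injective (ZMod p) (hS.1 u hu).2 h')
      rfl
    · rintro ⟨⟨x, hxW⟩, hx0⟩
      obtain ⟨u, ⟨hu, c, rfl⟩, -⟩ := hS.2 _ hxW fun h => hx0 (Subtype.ext h)
      have hc : c ≠ 0 := by
        rintro rfl
        exact hx0 (Subtype.ext (zero_smul _ _))
      exact ⟨(⟨u, hu⟩, Units.mk0 c hc), rfl⟩
  rw [← Nat.card_subtype_ne, ← Nat.card_eq_of_bijective f hf, Nat.card_prod,
    Nat.card_eq_finsetCard, Nat.card_eq_fintype_card (α := (ZMod p)ˣ), ZMod.card_units]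

theorem card_eq_sum_pow {M : Type*} [AddCommGroup M] [Module (ZMod p) M]
    {W : Submodule (ZMod p) M} {S : Finset M} (hS : IsLineReps W S)
    [Module.Finite (ZMod p) W] :
    S.card = ∑ i ∈ Finset.range (Module.finrank (ZMod p) W), p ^ i := by
  have := Module.finite_of_finite (ZMod p) (M := W)
  have := Fintype.ofFinite W
  have hcardW : Nat.card W = p ^ Module.finrank (ZMod p) W := by
    rw [Nat.card_eq_fintype_card, Module.card_eq_pow_finrank (K := ZMod p), ZMod.card]
  have hgeom := geom_sum_mul_add (p - 1) (Module.finrank (ZMod p) W)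
  rw [Nat.sub_add_cancel (Fact.out : p.Prime).one_lt.le, ← hcardW] at hgeom
  have hS' := hS.card_mul_sub_one
  exact Nat.eq_of_mul_eq_mul_right (Nat.sub_pos_of_lt (Fact.out : p.Prime).one_lt) (by omega)

theorem eq_of_associated {σ : Type*} {W : Submodule (ZMod p) (MvPolynomial σ (ZMod p))}
    {S : Finset (MvPolynomial σ (ZMod p))} (hS : IsLineReps W S) {u u' : MvPolynomial σ (ZMod p)}
    (hu : u ∈ S) (hu' : u' ∈ S) (h : Associated u u') : u = u' := by
  obtain ⟨t, rfl⟩ := h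
  obtain ⟨c, -, hc⟩ := isUnit_iff_eq_C_of_isReduced.mp t.isUnit
  obtain ⟨y, -, hy⟩ := hS.2 _ (hS.1 _ hu').1 (hS.1 _ hu').2
  exact (hy u ⟨hu, c, by rw [hc, smul_eq_C_mul, mul_comm]⟩).trans
    (hy _ ⟨hu', 1, (one_smul _ _).symm⟩).symm

end IsLineReps

section linForm

variable {p m : ℕ}

theorem linForm_eq_sum_smul (u : Fin m → ZMod p) : linForm p m u = ∑ i, u i • X i := by
  simp only [linForm, smul_eq_C_mul]

theorem isHomogeneous_linForm (u : Fin m → ZMod p) : (linForm p m u).IsHomogeneous 1 :=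
  IsHomogeneous.sum _ _ _ fun _ _ => isHomogeneous_C_mul_X _ _

variable [Fact p.Prime]

theorem det_moore_linForm (v : Matrix (Fin m) (Fin m) (ZMod p)) :
    (moore p fun j => linForm p m (v j)).det = (moore p X).det * C v.det := by
  simp only [linForm_eq_sum_smul, moore_sum_smul, det_mul, det_transpose, algebraMap_eq]
  rw [RingHom.map_det]
  rfl

theorem det_ne_zero_of_linearIndependent_linForm {v : Matrix (Fin m) (Fin m) (ZMod p)}
    (hv : LinearIndependent (ZMod p) fun j => linForm p m (v j)) : v.det ≠ 0 := by
  classical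
  have hlin : (fun j => linForm p m (v j)) = Fintype.linearCombination (ZMod p) X ∘ v := by
    funext j
    show linForm p m (v j) = Fintype.linearCombination (ZMod p) X (v j)
    rw [Fintype.linearCombination_apply, linForm_eq_sum_smul]
  rw [hlin] at hv
  exact (isUnit_iff_isUnit_det v).mp (linearIndependent_rows_iff_isUnit.mp hv.of_comp) |>.ne_zero

end linForm

theorem stmt2_general (p m : ℕ) [Fact p.Prime]
    (v : Fin m → Fin m → ZMod p)
    (hind : LinearIndependent (ZMod p) (fun j => linForm p m (v j)))
    (S : Finset (MvPolynomial (Fin m) (ZMod p)))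
    (hS : IsLineReps (Submodule.span (ZMod p) (Set.range fun j => linForm p m (v j))) S) :
    ∃ lam : ZMod p, lam ≠ 0 ∧
      Matrix.det (Matrix.of fun i j : Fin m => (linForm p m (v j)) ^ p ^ (i : ℕ)) =
        MvPolynomial.C lam * ∏ w ∈ S, w := by
  change ∃ lam : ZMod p, lam ≠ 0 ∧ (moore p fun j => linForm p m (v j)).det = C lam * _
  have hW : ∀ u ∈ S, u.IsHomogeneous 1 ∧ u ≠ 0 := fun u hu =>
    ⟨(mem_homogeneousSubmodule 1 u).mp <| Submodule.span_le.mpr (Set.range_subset_iff.mpr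
      fun j => (mem_homogeneousSubmodule _ _).mpr (isHomogeneous_linForm (v j))) (hS.1 u hu).1,
      (hS.1 u hu).2⟩
  have hcard : S.card = ∑ i : Fin m, p ^ (i : ℕ) := by
    have := Module.Finite.span_of_finite (ZMod p) (Set.finite_range fun j => linForm p m (v j))
    rw [hS.card_eq_sum_pow, finrank_span_eq_card hind, Fintype.card_fin,
      Fin.sum_univ_eq_sum_range (fun i => p ^ i)]
  refine exists_eq_C_mul_of_dvd_of_isHomogeneous (n := ∑ i : Fin m, p ^ (i : ℕ)) ?_ ?_ ?_ ?_
  · rw [det_moore_linForm (v := v)]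
    simpa using (isHomogeneous_det_moore_X p).mul (isHomogeneous_C _ (det v))
  · simpa [hcard] using IsHomogeneous.prod S id (fun _ => 1) fun u hu => (hW u hu).1
  · rw [det_moore_linForm (v := v)]
    exact mul_ne_zero (det_moore_X_ne_zero (Fact.out : p.Prime).one_lt)
      (C_ne_zero.mpr (det_ne_zero_of_linearIndependent_linForm hind))
  · exact Finset.prod_dvd_of_prime_of_eq_of_associated
      (fun u hu => prime_of_isHomogeneous_one (hW u hu).1 (hW u hu).2)
      (fun u hu u' hu' => hS.eq_of_associated hu hu')
      (fun u hu => dvd_det_moore_of_mem_span (hS.1 u hu).1 (hS.1 u hu).2)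

/-- if `w_1, …, w_m` are linearly independent linear forms with span `W`
and `S` is a system of line representatives for `W`, then
`det M(w_1,…,w_m) = λ · ∏_{w ∈ S} w` for some nonzero scalar `λ ∈ 𝔽_p`. -/
theorem stmt2 (p m : ℕ) [Fact p.Prime] (hm : 1 ≤ m)
    (v : Fin m → Fin m → ZMod p)
    (hind : LinearIndependent (ZMod p) (fun j => linForm p m (v j)))
    (S : Finset (MvPolynomial (Fin m) (ZMod p)))
    (hS : IsLineReps (Submodule.span (ZMod p) (Set.range fun j => linForm p m (v j))) S) :
    ∃ lam : ZMod p, lam ≠ 0 ∧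
      Matrix.det (Matrix.of fun i j : Fin m => (linForm p m (v j)) ^ p ^ (i : ℕ)) =
        MvPolynomial.C lam * ∏ w ∈ S, w :=
  stmt2_general p m v hind S hS
end

section
/- Let φ be an 𝔽_p-linear endomorphism of V, let g ∈ V* be a linear functional, let s ≥ 0, and let S be a system of line representatives for the image φ(V). Set P := ∏_{v ∈ S, g(v) ≠ 0} ℓ(v)^(p^s) ∈ B. Then the derivation P · D_{g∘φ} lies in the B-submodule of the module of 𝔽_p-linear derivations of B generated by the set { φ^{[p^r]} : r ≥ s }. -/
/-!
Let `W = φ(V)`. If `g` does not vanish on `W`, fix `w₁ ∈ W` with `g w₁ = 1` and a basis of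
`U = ker g ⊓ W`. The subspace polynomial `F(y) = ∏_{u ∈ U} (y - ℓ(u))` is a `p`-polynomial
`∑_j a_j y^(p^j)` (induction on `dim U`, using `∏_{c ∈ 𝔽_p} (y - c z) = y^p - z^(p-1) y`), hence
`𝔽_p`-linear in `y`, and it vanishes on `ℓ(U)`. So `F(ℓ w) = g(w) F(ℓ w₁)` for `w ∈ W`, while
`F(ℓ w₁) = ∏_{w ∈ W, g w = 1} ℓ(w)` is a nonzero constant times `∏_{v ∈ S, g v ≠ 0} ℓ(v)`,
because `v ↦ g(v)⁻¹ v` maps these representatives bijectively onto the hyperplane `{g = 1}` of `W`.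
Raising to the power `p^s` gives `g(φ eᵢ) P = ∑_j b_j ℓ(φ eᵢ)^(p^(j+s))` for every `i`, that is,
`P D_{g∘φ} = ∑_j b_j φ^{[p^(j+s)]}`.
-/

open MvPolynomial

/-- For `f ∈ V*`, the unique `𝔽_p`-linear derivation `D_f` of `B` with
`D_f(X_i) = f(e_i)` (a constant) for each `i`. -/
noncomputable def constDer (p m : ℕ) (f : (Fin m → ZMod p) →ₗ[ZMod p] ZMod p) :
    Derivation (ZMod p) (MvPolynomial (Fin m) (ZMod p)) (MvPolynomial (Fin m) (ZMod p)) :=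
  MvPolynomial.mkDerivation (ZMod p) fun i => MvPolynomial.C (f (Pi.single i 1))

/-- For an endomorphism `φ` of `V` and `r ≥ 0`, the unique `𝔽_p`-linear derivation
`φ^{[p^r]}` of `B` with `φ^{[p^r]}(X_i) = ℓ(φ(e_i))^(p^r)` for each `i`. -/
noncomputable def frobDer (p m : ℕ)
    (φ : (Fin m → ZMod p) →ₗ[ZMod p] (Fin m → ZMod p)) (r : ℕ) :
    Derivation (ZMod p) (MvPolynomial (Fin m) (ZMod p)) (MvPolynomial (Fin m) (ZMod p)) :=
  MvPolynomial.mkDerivation (ZMod p) fun i => (linForm p m (φ (Pi.single i 1))) ^ p ^ r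

theorem FiniteField.prod_X_sub_C_eq_X_pow_card_sub_X (K : Type*) [Field K] [Fintype K] :
    ∏ a : K, (Polynomial.X - Polynomial.C a) = Polynomial.X ^ Fintype.card K - Polynomial.X := by
  classical
  have hq : 1 < Fintype.card K := Fintype.one_lt_card
  have hmonic : (Polynomial.X ^ Fintype.card K - Polynomial.X : Polynomial K).Monic :=
    Polynomial.monic_X_pow_sub (by rw [Polynomial.degree_X]; exact_mod_cast hq)
  have h := Polynomial.prod_multiset_X_sub_C_of_monic_of_roots_card_eq hmonic (by
    rw [FiniteField.roots_X_pow_card_sub_X, FiniteField.X_pow_card_sub_X_natDegree_eq K hq]; rfl)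
  rwa [FiniteField.roots_X_pow_card_sub_X] at h

theorem ZMod.prod_sub_smul_eq {p : ℕ} [Fact p.Prime] {A : Type*} [CommRing A]
    [Algebra (ZMod p) A] (y z : A) :
    ∏ c : ZMod p, (y - c • z) = y ^ p - z ^ (p - 1) * y := by
  have hp := (Fact.out : p.Prime).one_lt
  -- homogenize `∏_c (X - c) = X^p - X` and evaluate at `(y, z)`
  have hprod : (∏ c : ZMod p, (Polynomial.X - Polynomial.C c)).homogenize p =
      ∏ c : ZMod p, (Polynomial.X - Polynomial.C c).homogenize 1 := by
    have h := Polynomial.homogenize_finsetProd (s := Finset.univ) (n := fun _ => 1)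
      (fun c _ => (Polynomial.natDegree_X_sub_C (c : ZMod p)).le)
    rwa [Finset.sum_const, Finset.card_univ, ZMod.card, smul_eq_mul, mul_one] at h
  have key := congrArg (fun q => MvPolynomial.aeval ![y, z] (Polynomial.homogenize q p))
    (FiniteField.prod_X_sub_C_eq_X_pow_card_sub_X (ZMod p))
  simp only [ZMod.card, hprod] at key
  simpa [Polynomial.homogenize_X_pow, Polynomial.homogenize_X (show p ≠ 0 by omega),
    Algebra.smul_def, mul_comm] using key

section PPolyFun

variable (A : Type*) [CommRing A] (p : ℕ)

def pPolyFun (k : ℕ) : Submodule A (A → A) :=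
  Submodule.span A (Set.range fun j : ℕ => fun y : A => y ^ p ^ (j + k))

variable {A p}

theorem pPolyFun_succ_le (k : ℕ) : pPolyFun A p (k + 1) ≤ pPolyFun A p k :=
  Submodule.span_mono <| Set.range_subset_iff.2 fun j =>
    ⟨j + 1, by simp only [add_right_comm j 1 k, add_assoc]⟩

theorem id_mem_pPolyFun : (fun y : A => y) ∈ pPolyFun A p 0 :=
  Submodule.subset_span ⟨0, by simp⟩

theorem map_add_of_mem_pPolyFun [Fact p.Prime] [CharP A p] {k : ℕ} {f : A → A}
    (hf : f ∈ pPolyFun A p k) (x y : A) : f (x + y) = f x + f y := by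
  induction hf using Submodule.span_induction with
  | mem f hf =>
    obtain ⟨j, rfl⟩ := hf
    exact add_pow_char_pow x y p (j + k)
  | zero => simp
  | add f g _ _ hf hg => simp only [Pi.add_apply, hf, hg, add_add_add_comm]
  | smul a f _ hf => simp only [Pi.smul_apply, smul_eq_mul, hf, mul_add]

theorem map_sub_of_mem_pPolyFun [Fact p.Prime] [CharP A p] {k : ℕ} {f : A → A}
    (hf : f ∈ pPolyFun A p k) (x y : A) : f (x - y) = f x - f y :=
  eq_sub_of_add_eq (by rw [← map_add_of_mem_pPolyFun hf, sub_add_cancel])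

theorem map_smul_of_mem_pPolyFun [Fact p.Prime] [Algebra (ZMod p) A] {k : ℕ} {f : A → A}
    (hf : f ∈ pPolyFun A p k) (c : ZMod p) (y : A) : f (c • y) = c • f y := by
  induction hf using Submodule.span_induction with
  | mem f hf =>
    obtain ⟨j, rfl⟩ := hf
    simp only [smul_pow, ZMod.pow_card_pow]
  | zero => simp
  | add f g _ _ hf hg => simp only [Pi.add_apply, hf, hg, smul_add]
  | smul a f _ hf => simp only [Pi.smul_apply, smul_eq_mul, hf, mul_smul_comm]

theorem pow_char_mem_pPolyFun [Fact p.Prime] [CharP A p] {k : ℕ} {f : A → A}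
    (hf : f ∈ pPolyFun A p k) : (fun y => f y ^ p) ∈ pPolyFun A p (k + 1) := by
  induction hf using Submodule.span_induction with
  | mem f hf =>
    obtain ⟨j, rfl⟩ := hf
    refine Submodule.subset_span ⟨j, funext fun y => ?_⟩
    simp only [← pow_mul, ← pow_succ, add_assoc]
  | zero =>
    convert Submodule.zero_mem (pPolyFun A p (k + 1)) using 1
    exact funext fun _ => zero_pow (Fact.out : p.Prime).ne_zero
  | add f g _ _ hf hg =>
    convert Submodule.add_mem _ hf hg using 1
    exact funext fun y => add_pow_char (f y) (g y) p
  | smul a f _ hf =>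
    convert Submodule.smul_mem _ (a ^ p) hf using 1
    exact funext fun y => mul_pow a (f y) p

theorem pow_char_pow_mem_pPolyFun [Fact p.Prime] [CharP A p] {k : ℕ} {f : A → A}
    (hf : f ∈ pPolyFun A p k) (n : ℕ) : (fun y => f y ^ p ^ n) ∈ pPolyFun A p (k + n) := by
  induction n with
  | zero => simpa using hf
  | succ n ih => simpa only [pow_succ, pow_mul, ← add_assoc] using pow_char_mem_pPolyFun ih

end PPolyFun

section SpanProd

variable (p : ℕ) [Fact p.Prime] {A : Type*} [CommRing A] [Algebra (ZMod p) A]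

def spanProd {n : ℕ} (t : Fin n → A) (y : A) : A :=
  ∏ c : Fin n → ZMod p, (y - ∑ i, c i • t i)

variable {p}

theorem spanProd_sum_smul {n : ℕ} (t : Fin n → A) (c : Fin n → ZMod p) :
    spanProd p t (∑ i, c i • t i) = 0 :=
  Finset.prod_eq_zero (Finset.mem_univ c) (sub_self _)

theorem spanProd_cons {n : ℕ} (t₀ : A) (t : Fin n → A) (y : A) :
    spanProd p (Fin.cons t₀ t) y = ∏ c : ZMod p, spanProd p t (y - c • t₀) := by
  rw [spanProd, ← (Fin.consEquiv fun _ => ZMod p).prod_comp, Fintype.prod_prod_type]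
  refine Finset.prod_congr rfl fun c _ => Finset.prod_congr rfl fun c' _ => ?_
  simp [Fin.consEquiv, Fin.sum_univ_succ, sub_sub]

theorem spanProd_mem_pPolyFun [CharP A p] {n : ℕ} (t : Fin n → A) :
    spanProd p t ∈ pPolyFun A p 0 := by
  induction n with
  | zero =>
    convert id_mem_pPolyFun (A := A) (p := p) with y
    simp [spanProd]
  | succ n ih =>
    have hF := ih (Fin.tail t)
    have hcons : spanProd p t = fun y => spanProd p (Fin.tail t) y ^ p -
        spanProd p (Fin.tail t) (t 0) ^ (p - 1) * spanProd p (Fin.tail t) y := by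
      funext y
      rw [← ZMod.prod_sub_smul_eq, ← Fin.cons_self_tail t, spanProd_cons]
      simp only [Fin.cons_zero, Fin.tail_cons, map_sub_of_mem_pPolyFun hF,
        map_smul_of_mem_pPolyFun hF]
    rw [hcons]
    exact sub_mem (pPolyFun_succ_le 0 (pow_char_mem_pPolyFun hF))
      (Submodule.smul_mem _ (spanProd p (Fin.tail t) (t 0) ^ (p - 1)) hF)

end SpanProd

namespace IsLineReps

variable {p : ℕ} [Fact p.Prime] {M : Type*} [AddCommGroup M] [Module (ZMod p) M]
  {W : Submodule (ZMod p) M} {S : Finset M}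

theorem eq_of_smul_eq (hS : IsLineReps W S) {v₁ v₂ : M} (hv₁ : v₁ ∈ S) (hv₂ : v₂ ∈ S)
    {c₁ c₂ : ZMod p} (h : c₁ • v₁ = c₂ • v₂) (hne : c₁ • v₁ ≠ 0) : v₁ = v₂ :=
  (hS.2 _ (W.smul_mem c₁ (hS.1 v₁ hv₁).1) hne).unique ⟨hv₁, c₁, rfl⟩ ⟨hv₂, c₂, h⟩

theorem prod_filter_inv_smul (hS : IsLineReps W S) (g : M →ₗ[ZMod p] ZMod p) {w₁ : M}
    (hw₁ : w₁ ∈ W) (hgw₁ : g w₁ = 1) {β : Type*} [CommMonoid β] (f : M → β)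
    [Fintype ↥(LinearMap.ker g ⊓ W)] :
    ∏ v ∈ S.filter (fun v => g v ≠ 0), f ((g v)⁻¹ • v) =
      ∏ u : ↥(LinearMap.ker g ⊓ W), f (w₁ - u) := by
  have hmem : ∀ v ∈ S.filter (fun v => g v ≠ 0), w₁ - (g v)⁻¹ • v ∈ LinearMap.ker g ⊓ W := by
    intro v hv
    rw [Finset.mem_filter] at hv
    refine ⟨?_, W.sub_mem hw₁ (W.smul_mem _ (hS.1 v hv.1).1)⟩
    simp [hgw₁, hv.2]
  refine Finset.prod_bij (fun v hv => ⟨_, hmem v hv⟩) (fun _ _ => Finset.mem_univ _) ?_ ?_ ?_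
  · intro v₁ hv₁ v₂ hv₂ h
    rw [Finset.mem_filter] at hv₁ hv₂
    refine hS.eq_of_smul_eq hv₁.1 hv₂.1 (sub_right_injective (congrArg Subtype.val h)) ?_
    intro h0
    simpa [hv₁.2] using congrArg g h0
  · rintro ⟨u, hu⟩ -
    have hgu : g u = 0 := hu.1
    have hne : w₁ - u ≠ 0 := fun h0 => by simpa [hgu, hgw₁] using congrArg g h0
    obtain ⟨v, ⟨hv, c, hc⟩, -⟩ := hS.2 _ (W.sub_mem hw₁ hu.2) hne
    have hcg : c * g v = 1 := by simpa [hgu, hgw₁] using (congrArg g hc).symm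
    have hgv : g v ≠ 0 := right_ne_zero_of_mul_eq_one hcg
    refine ⟨v, Finset.mem_filter.2 ⟨hv, hgv⟩, Subtype.ext ?_⟩
    simp [← eq_inv_of_mul_eq_one_left hcg, ← hc]
  · intro v _
    simp

end IsLineReps

section LinearImage

variable {p : ℕ} [Fact p.Prime] {A : Type*} [CommRing A] [Algebra (ZMod p) A]
  {V : Type*} [AddCommGroup V] [Module (ZMod p) V]

theorem spanProd_map_basis (L : V →ₗ[ZMod p] A) {U : Submodule (ZMod p) V} [Fintype U] {n : ℕ}
    (b : Module.Basis (Fin n) (ZMod p) U) (w : V) :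
    spanProd p (fun i => L (b i)) (L w) = ∏ u : U, L (w - u) := by
  rw [← b.equivFun.symm.toEquiv.prod_comp, spanProd]
  simp [Module.Basis.equivFun_symm_apply]

theorem exists_mem_pPolyFun_apply_eq_smul_prod [CharP A p] [Finite V] (L : V →ₗ[ZMod p] A)
    {W : Submodule (ZMod p) V} {S : Finset V} (hS : IsLineReps W S) (g : V →ₗ[ZMod p] ZMod p) :
    ∃ F ∈ pPolyFun A p 0,
      ∀ w ∈ W, F (L w) = g w • ∏ v ∈ S.filter (fun v => g v ≠ 0), L v := by
  classical
  by_cases hg : ∀ w ∈ W, g w = 0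
  · exact ⟨0, zero_mem _, fun w hw => by simp [hg w hw]⟩
  push Not at hg
  obtain ⟨w₀, hw₀, hgw₀⟩ := hg
  set w₁ := (g w₀)⁻¹ • w₀
  have hw₁ : w₁ ∈ W := W.smul_mem _ hw₀
  have hgw₁ : g w₁ = 1 := by simp [w₁, hgw₀]
  set U := LinearMap.ker g ⊓ W
  have := Fintype.ofFinite U
  let b := Module.finBasis (ZMod p) U
  set F := spanProd p (fun i => L (b i)) with hFdef
  have hF : F ∈ pPolyFun A p 0 := spanProd_mem_pPolyFun _
  have hFU : ∀ u ∈ U, F (L u) = 0 := by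
    intro u hu
    have h := congrArg (fun x : U => L x) (b.sum_repr ⟨u, hu⟩)
    simp only [Submodule.coe_sum, Submodule.coe_smul, map_sum, map_smul] at h
    rw [← h, hFdef, spanProd_sum_smul]
  have hFW : ∀ w ∈ W, F (L w) = g w • F (L w₁) := by
    intro w hw
    have hmem : w - g w • w₁ ∈ U := ⟨by simp [hgw₁], W.sub_mem hw (W.smul_mem _ hw₁)⟩
    rw [← sub_eq_zero, ← map_smul_of_mem_pPolyFun hF, ← map_sub_of_mem_pPolyFun hF, ← map_smul,
      ← map_sub, hFU _ hmem]
  set γ := ∏ v ∈ S.filter (fun v => g v ≠ 0), (g v)⁻¹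
  have hγ : γ ≠ 0 := Finset.prod_ne_zero_iff.2 fun v hv => inv_ne_zero (Finset.mem_filter.1 hv).2
  have hFw₁ : F (L w₁) = γ • ∏ v ∈ S.filter (fun v => g v ≠ 0), L v := by
    rw [hFdef, spanProd_map_basis, ← hS.prod_filter_inv_smul g hw₁ hgw₁]
    simp only [map_smul, Finset.prod_smul]
    rfl
  refine ⟨γ⁻¹ • F, Submodule.smul_of_tower_mem _ _ hF, fun w hw => ?_⟩
  rw [Pi.smul_apply, hFW w hw, hFw₁, smul_comm, inv_smul_smul₀ hγ]

end LinearImage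

noncomputable def linFormₗ (p m : ℕ) :
    (Fin m → ZMod p) →ₗ[ZMod p] MvPolynomial (Fin m) (ZMod p) where
  toFun := linForm p m
  map_add' v w := by simp [linForm, add_mul, Finset.sum_add_distrib]
  map_smul' c v := by simp [linForm, Finset.mul_sum, smul_eq_C_mul, mul_assoc]

theorem smul_constDer_mem_span_frobDer {p m : ℕ}
    (φ : (Fin m → ZMod p) →ₗ[ZMod p] (Fin m → ZMod p)) (g : (Fin m → ZMod p) →ₗ[ZMod p] ZMod p)
    {s : ℕ} {F : MvPolynomial (Fin m) (ZMod p) → MvPolynomial (Fin m) (ZMod p)}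
    (hF : F ∈ pPolyFun _ p s) {P : MvPolynomial (Fin m) (ZMod p)}
    (hFP : ∀ w ∈ LinearMap.range φ, F (linForm p m w) = g w • P) :
    P • constDer p m (g ∘ₗ φ) ∈
      Submodule.span (MvPolynomial (Fin m) (ZMod p)) {d | ∃ r, s ≤ r ∧ d = frobDer p m φ r} := by
  let Ψ : (MvPolynomial (Fin m) (ZMod p) → MvPolynomial (Fin m) (ZMod p))
      →ₗ[MvPolynomial (Fin m) (ZMod p)]
        Derivation (ZMod p) (MvPolynomial (Fin m) (ZMod p)) (MvPolynomial (Fin m) (ZMod p)) :=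
    { toFun := fun F => mkDerivation (ZMod p) fun i => F (linForm p m (φ (Pi.single i 1)))
      map_add' := fun F G => derivation_ext fun i => by simp [mkDerivation_X]
      map_smul' := fun a F => derivation_ext fun i => by simp [mkDerivation_X] }
  have hΨF : Ψ F = P • constDer p m (g ∘ₗ φ) := derivation_ext fun i => by
    simp [Ψ, constDer, mkDerivation_X, hFP _ (LinearMap.mem_range_self φ _), smul_eq_C_mul,
      mul_comm]
  have hmap : (pPolyFun _ p s).map Ψ ≤
      Submodule.span (MvPolynomial (Fin m) (ZMod p)) {d | ∃ r, s ≤ r ∧ d = frobDer p m φ r} := by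
    rw [pPolyFun, Submodule.map_span]
    refine Submodule.span_mono ?_
    rintro _ ⟨_, ⟨j, rfl⟩, rfl⟩
    exact ⟨j + s, Nat.le_add_left s j, rfl⟩
  exact hΨF ▸ hmap ⟨F, hF, rfl⟩

theorem stmt7_general (p m : ℕ) [Fact p.Prime]
    (φ : (Fin m → ZMod p) →ₗ[ZMod p] (Fin m → ZMod p))
    (g : (Fin m → ZMod p) →ₗ[ZMod p] ZMod p) (s : ℕ)
    (S : Finset (Fin m → ZMod p))
    (hS : IsLineReps (LinearMap.range φ) S) :
    (∏ v ∈ S.filter (fun v => g v ≠ 0), (linForm p m v) ^ p ^ s) • constDer p m (g ∘ₗ φ) ∈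
      Submodule.span (MvPolynomial (Fin m) (ZMod p))
        {d | ∃ r, s ≤ r ∧ d = frobDer p m φ r} := by
  obtain ⟨F, hF, hFW⟩ := exists_mem_pPolyFun_apply_eq_smul_prod (linFormₗ p m) hS g
  have hFs := pow_char_pow_mem_pPolyFun hF s
  rw [zero_add] at hFs
  refine smul_constDer_mem_span_frobDer φ g hFs fun w hw => ?_
  rw [Finset.prod_pow, ← ZMod.pow_card_pow (n := s) (g w), ← smul_pow]
  exact congrArg (· ^ p ^ s) (hFW w hw)

/-- with `S` a system of line representatives for `φ(V)` and
`P = ∏_{v ∈ S, g(v) ≠ 0} ℓ(v)^(p^s)`, the derivation `P • D_{g∘φ}` lies in the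
`B`-submodule of derivations generated by `{φ^{[p^r]} : r ≥ s}`. -/
theorem stmt7 (p m : ℕ) [Fact p.Prime] (hm : 1 ≤ m)
    (φ : (Fin m → ZMod p) →ₗ[ZMod p] (Fin m → ZMod p))
    (g : (Fin m → ZMod p) →ₗ[ZMod p] ZMod p) (s : ℕ)
    (S : Finset (Fin m → ZMod p))
    (hS : IsLineReps (LinearMap.range φ) S) :
    (∏ v ∈ S.filter (fun v => g v ≠ 0), (linForm p m v) ^ p ^ s) • constDer p m (g ∘ₗ φ) ∈
      Submodule.span (MvPolynomial (Fin m) (ZMod p))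
        {d | ∃ r, s ≤ r ∧ d = frobDer p m φ r} :=
  stmt7_general p m φ g s S hS
end
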